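/- arXiv:2308.08358 — 2 statements merged into one kernel-verified Lean document; each statement's English description precedes it below -/
import Mathlib

section
/- Suppose ‖b‖₂ ≤ 1. Then for every x ∈ ℝ^d, the ℓ²-operator norm of the m×m matrix B(x) satisfies ‖B(x)‖ ≤ 16. Moreover each of the five constituent terms is bounded: ‖diag(f∘(f+c))‖ ≤ 3, ‖diag(f)(c+f)fᵀ‖ ≤ 3, ‖f(c+f)ᵀdiag(f)‖ ≤ 3, ‖⟨2c+f,f⟩ffᵀ‖ ≤ 5, ‖⟨c,f⟩diag(f)‖ ≤ 2 (evaluated at x). -/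
open Matrix BigOperators

noncomputable section

/-- entrywise ReLU on a Euclidean vector -/
def relu {k : ℕ} (x : EuclideanSpace ℝ (Fin k)) : EuclideanSpace ℝ (Fin k) :=
  WithLp.toLp 2 (fun i => max 0 (x i))

/-- entrywise exponential on a Euclidean vector -/
def vexp {k : ℕ} (x : EuclideanSpace ℝ (Fin k)) : EuclideanSpace ℝ (Fin k) :=
  WithLp.toLp 2 (fun i => Real.exp (x i))

/-- matrix-vector product as a map between Euclidean spaces -/
def mulE {k l : ℕ} (A : Matrix (Fin k) (Fin l) ℝ) (x : EuclideanSpace ℝ (Fin l)) :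
    EuclideanSpace ℝ (Fin k) :=
  WithLp.toLp 2 (fun i => ∑ j, A i j * x j)

/-- ℓ²-operator norm of a matrix -/
def opNorm {k l : ℕ} (A : Matrix (Fin k) (Fin l) ℝ) : ℝ :=
  ‖LinearMap.toContinuousLinearMap (Matrix.toEuclideanLin A)‖

/-- indicator of positivity, entrywise: the vector 1[y > 0] -/
def ind {k : ℕ} (y : EuclideanSpace ℝ (Fin k)) : Fin k → ℝ :=
  fun i => if 0 < y i then 1 else 0

variable {n m d : ℕ}

/-- h(x) = φ(A₁ x) -/
def hfun (A₁ : Matrix (Fin n) (Fin d) ℝ) (x : EuclideanSpace ℝ (Fin d)) :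
    EuclideanSpace ℝ (Fin n) := relu (mulE A₁ x)

/-- u(x) = exp(A₂ φ(A₁ x)) -/
def ufun (A₁ : Matrix (Fin n) (Fin d) ℝ) (A₂ : Matrix (Fin m) (Fin n) ℝ)
    (x : EuclideanSpace ℝ (Fin d)) : EuclideanSpace ℝ (Fin m) :=
  vexp (mulE A₂ (hfun A₁ x))

/-- α(x) = ⟨u(x), 1_m⟩ -/
def afun (A₁ : Matrix (Fin n) (Fin d) ℝ) (A₂ : Matrix (Fin m) (Fin n) ℝ)
    (x : EuclideanSpace ℝ (Fin d)) : ℝ :=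
  ∑ i, ufun A₁ A₂ x i

/-- f(x) = α(x)⁻¹ • u(x) -/
def ffun (A₁ : Matrix (Fin n) (Fin d) ℝ) (A₂ : Matrix (Fin m) (Fin n) ℝ)
    (x : EuclideanSpace ℝ (Fin d)) : EuclideanSpace ℝ (Fin m) :=
  (afun A₁ A₂ x)⁻¹ • ufun A₁ A₂ x

/-- c(x) = f(x) - b -/
def cfun (A₁ : Matrix (Fin n) (Fin d) ℝ) (A₂ : Matrix (Fin m) (Fin n) ℝ)
    (b : EuclideanSpace ℝ (Fin m)) (x : EuclideanSpace ℝ (Fin d)) :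
    EuclideanSpace ℝ (Fin m) :=
  ffun A₁ A₂ x - b

/-- the matrix B(x) appearing in the decomposition of the Hessian -/
def Bmat (A₁ : Matrix (Fin n) (Fin d) ℝ) (A₂ : Matrix (Fin m) (Fin n) ℝ)
    (b : EuclideanSpace ℝ (Fin m)) (x : EuclideanSpace ℝ (Fin d)) :
    Matrix (Fin m) (Fin m) ℝ :=
  Matrix.diagonal (fun i => ffun A₁ A₂ x i * (ffun A₁ A₂ x i + cfun A₁ A₂ b x i))
  - Matrix.diagonal (fun i => ffun A₁ A₂ x i)
      * Matrix.vecMulVec (fun i => cfun A₁ A₂ b x i + ffun A₁ A₂ x i) (fun i => ffun A₁ A₂ x i)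
  - Matrix.vecMulVec (fun i => ffun A₁ A₂ x i) (fun i => cfun A₁ A₂ b x i + ffun A₁ A₂ x i)
      * Matrix.diagonal (fun i => ffun A₁ A₂ x i)
  + (∑ i, (2 * cfun A₁ A₂ b x i + ffun A₁ A₂ x i) * ffun A₁ A₂ x i)
      • Matrix.vecMulVec (fun i => ffun A₁ A₂ x i) (fun i => ffun A₁ A₂ x i)
  - (∑ i, cfun A₁ A₂ b x i * ffun A₁ A₂ x i)
      • Matrix.diagonal (fun i => ffun A₁ A₂ x i)


open scoped Matrix.Norms.L2Operator

lemma opNorm_eq_norm {k l : ℕ} (A : Matrix (Fin k) (Fin l) ℝ) : opNorm A = ‖A‖ := rfl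

lemma abs_coord_le {k : ℕ} (y : EuclideanSpace ℝ (Fin k)) (i : Fin k) : |y i| ≤ ‖y‖ := by
  rw [EuclideanSpace.norm_eq]
  rw [← Real.sqrt_sq_eq_abs]
  apply Real.sqrt_le_sqrt
  exact Finset.single_le_sum (f := fun j => ‖y j‖ ^ 2) (fun j _ => by positivity)
    (Finset.mem_univ i) |>.trans_eq' (by rw [Real.norm_eq_abs, sq_abs])

set_option maxHeartbeats 800000 in
lemma norm_diagonal_le {k : ℕ} (v : Fin k → ℝ) (C : ℝ) (hC : 0 ≤ C)
    (h : ∀ i, |v i| ≤ C) : ‖Matrix.diagonal v‖ ≤ C := by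
  rw [Matrix.l2_opNorm_def]
  refine ContinuousLinearMap.opNorm_le_bound _ hC fun x => ?_
  have hx : ∀ i : Fin k, ((Matrix.toEuclideanLin ≪≫ₗ LinearMap.toContinuousLinearMap) (Matrix.diagonal v)) x i = v i * x i := by
    intro i
    show (Matrix.diagonal v *ᵥ _) i = _
    simp [Matrix.mulVec_diagonal]
  rw [EuclideanSpace.norm_eq, EuclideanSpace.norm_eq]
  rw [show C * Real.sqrt (∑ i, ‖x i‖ ^ 2) = Real.sqrt (C^2 * ∑ i, ‖x i‖ ^ 2) by
    rw [Real.sqrt_mul (by positivity), Real.sqrt_sq hC]]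
  apply Real.sqrt_le_sqrt
  rw [Finset.mul_sum]
  apply Finset.sum_le_sum
  intro i _
  rw [hx i]
  simp only [Real.norm_eq_abs, abs_mul, mul_pow, sq_abs]
  have := h i
  have h2 : v i ^ 2 ≤ C ^ 2 := by
    have := abs_le.mp this
    nlinarith
  nlinarith [sq_nonneg (x i)]

set_option maxHeartbeats 800000 in
lemma norm_vecMulVec_le {k l : ℕ} (u : EuclideanSpace ℝ (Fin k)) (v : EuclideanSpace ℝ (Fin l)) :
    ‖Matrix.vecMulVec (u : Fin k → ℝ) (v : Fin l → ℝ)‖ ≤ ‖u‖ * ‖v‖ := by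
  rw [Matrix.l2_opNorm_def]
  refine ContinuousLinearMap.opNorm_le_bound _ (by positivity) fun x => ?_
  have hx : ((Matrix.toEuclideanLin ≪≫ₗ LinearMap.toContinuousLinearMap) (Matrix.vecMulVec (u : Fin k → ℝ) v)) x = (∑ j, v j * x j) • u := by
    ext i
    show (Matrix.vecMulVec (u : Fin k → ℝ) v *ᵥ _) i = _
    simp [Matrix.vecMulVec_apply, Matrix.mulVec, dotProduct, Finset.mul_sum, mul_comm, mul_assoc, mul_left_comm]
  rw [hx, norm_smul]
  have h1 : |∑ j, v j * x j| ≤ ‖v‖ * ‖x‖ := by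
    have := abs_real_inner_le_norm v x
    simpa [PiLp.inner_apply, mul_comm] using this
  calc ‖(∑ j, v j * x j)‖ * ‖u‖ ≤ (‖v‖ * ‖x‖) * ‖u‖ := by
        apply mul_le_mul_of_nonneg_right _ (norm_nonneg u)
        rwa [Real.norm_eq_abs]
    _ = ‖u‖ * ‖v‖ * ‖x‖ := by ring


/-- if ‖b‖₂ ≤ 1 then for every x, ‖B(x)‖ ≤ 16, and each of the five
constituent terms is bounded: the diagonal term by 3, the two rank-one-times-diagonal
terms by 3, the ⟨2c+f,f⟩ffᵀ term by 5, and the ⟨c,f⟩diag(f) term by 2. -/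
theorem statement4 (n m d : ℕ) (hn : 0 < n) (hm : 0 < m) (hd : 0 < d)
    (A₁ : Matrix (Fin n) (Fin d) ℝ) (A₂ : Matrix (Fin m) (Fin n) ℝ)
    (b : EuclideanSpace ℝ (Fin m)) (hb : ‖b‖ ≤ 1) :
    ∀ x : EuclideanSpace ℝ (Fin d),
      opNorm (Bmat A₁ A₂ b x) ≤ 16 ∧
      opNorm (Matrix.diagonal
        (fun i => ffun A₁ A₂ x i * (ffun A₁ A₂ x i + cfun A₁ A₂ b x i))) ≤ 3 ∧
      opNorm (Matrix.diagonal (fun i => ffun A₁ A₂ x i)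
        * Matrix.vecMulVec (fun i => cfun A₁ A₂ b x i + ffun A₁ A₂ x i)
            (fun i => ffun A₁ A₂ x i)) ≤ 3 ∧
      opNorm (Matrix.vecMulVec (fun i => ffun A₁ A₂ x i)
            (fun i => cfun A₁ A₂ b x i + ffun A₁ A₂ x i)
        * Matrix.diagonal (fun i => ffun A₁ A₂ x i)) ≤ 3 ∧
      opNorm ((∑ i, (2 * cfun A₁ A₂ b x i + ffun A₁ A₂ x i) * ffun A₁ A₂ x i)
        • Matrix.vecMulVec (fun i => ffun A₁ A₂ x i) (fun i => ffun A₁ A₂ x i)) ≤ 5 ∧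
      opNorm ((∑ i, cfun A₁ A₂ b x i * ffun A₁ A₂ x i)
        • Matrix.diagonal (fun i => ffun A₁ A₂ x i)) ≤ 2 := by
  intro x
  have hne : Nonempty (Fin m) := Fin.pos_iff_nonempty.mp hm
  set F : EuclideanSpace ℝ (Fin m) := ffun A₁ A₂ x with hF
  set C : EuclideanSpace ℝ (Fin m) := cfun A₁ A₂ b x with hCdef
  have hupos : ∀ i, 0 < ufun A₁ A₂ x i := fun i => by unfold ufun vexp; exact Real.exp_pos _
  have hapos : 0 < afun A₁ A₂ x := Finset.sum_pos (fun i _ => hupos i) Finset.univ_nonempty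
  have hFpos : ∀ i, 0 < F i := by
    intro i
    have : F i = (afun A₁ A₂ x)⁻¹ * ufun A₁ A₂ x i := rfl
    rw [this]
    exact mul_pos (inv_pos.mpr hapos) (hupos i)
  have hFsum : ∑ i, F i = 1 := by
    have h1 : ∀ i, F i = (afun A₁ A₂ x)⁻¹ * ufun A₁ A₂ x i := fun _ => rfl
    simp_rw [h1, ← Finset.mul_sum]
    exact inv_mul_cancel₀ hapos.ne'
  have hFle : ∀ i, F i ≤ 1 := fun i =>
    (Finset.single_le_sum (fun j _ => (hFpos j).le) (Finset.mem_univ i)).trans_eq hFsum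
  have hF2 : ∑ i, F i ^ 2 ≤ 1 := by
    calc ∑ i, F i ^ 2 ≤ ∑ i, F i :=
          Finset.sum_le_sum fun i _ => by nlinarith [hFpos i, hFle i]
      _ = 1 := hFsum
  have hnormF : ‖F‖ ≤ 1 := by
    rw [EuclideanSpace.norm_eq, show (1:ℝ) = Real.sqrt 1 by simp]
    apply Real.sqrt_le_sqrt
    simpa [Real.norm_eq_abs, sq_abs] using hF2
  have hnormC : ‖C‖ ≤ 2 := by
    have : C = F - b := rfl
    rw [this]
    calc ‖F - b‖ ≤ ‖F‖ + ‖b‖ := norm_sub_le _ _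
      _ ≤ 2 := by linarith
  have habsF : ∀ i, |F i| ≤ 1 := fun i => abs_le.mpr ⟨by linarith [hFpos i], hFle i⟩
  have habsC : ∀ i, |C i| ≤ 2 := fun i => (abs_coord_le C i).trans hnormC
  have hCS : |∑ i, C i * F i| ≤ 2 := by
    have h := abs_real_inner_le_norm C F
    rw [PiLp.inner_apply] at h
    calc |∑ i, C i * F i| ≤ ‖C‖ * ‖F‖ := by simpa [mul_comm] using h
      _ ≤ 2 * 1 := mul_le_mul hnormC hnormF (norm_nonneg F) (by norm_num)
      _ = 2 := by norm_num
  have hdiagF : ‖Matrix.diagonal (fun i => F i)‖ ≤ 1 :=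
    norm_diagonal_le _ 1 zero_le_one habsF
  have hCFfun : (fun i => C i + F i) = ((C + F : EuclideanSpace ℝ (Fin m)) : Fin m → ℝ) := rfl
  have hnormCF : ‖(C + F : EuclideanSpace ℝ (Fin m))‖ ≤ 3 := by
    calc ‖C + F‖ ≤ ‖C‖ + ‖F‖ := norm_add_le _ _
      _ ≤ 3 := by linarith
  have hvec1 : ‖Matrix.vecMulVec (fun i => C i + F i) (fun i => F i)‖ ≤ 3 := by
    rw [hCFfun]
    calc ‖Matrix.vecMulVec ((C + F : EuclideanSpace ℝ (Fin m)) : Fin m → ℝ) (F : Fin m → ℝ)‖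
        ≤ ‖(C + F : EuclideanSpace ℝ (Fin m))‖ * ‖F‖ := norm_vecMulVec_le _ _
      _ ≤ 3 * 1 := mul_le_mul hnormCF hnormF (norm_nonneg F) (by norm_num)
      _ = 3 := by norm_num
  have hvec2 : ‖Matrix.vecMulVec (fun i => F i) (fun i => C i + F i)‖ ≤ 3 := by
    rw [hCFfun]
    calc ‖Matrix.vecMulVec (F : Fin m → ℝ) ((C + F : EuclideanSpace ℝ (Fin m)) : Fin m → ℝ)‖
        ≤ ‖F‖ * ‖(C + F : EuclideanSpace ℝ (Fin m))‖ := norm_vecMulVec_le _ _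
      _ ≤ 1 * 3 := mul_le_mul hnormF hnormCF (norm_nonneg _) (by norm_num)
      _ = 3 := by norm_num
  have hvecFF : ‖Matrix.vecMulVec (fun i => F i) (fun i => F i)‖ ≤ 1 := by
    calc ‖Matrix.vecMulVec (F : Fin m → ℝ) (F : Fin m → ℝ)‖ ≤ ‖F‖ * ‖F‖ := norm_vecMulVec_le _ _
      _ ≤ 1 * 1 := mul_le_mul hnormF hnormF (norm_nonneg F) (by norm_num)
      _ = 1 := by norm_num
  -- the five terms
  have hT1 : ‖Matrix.diagonal (fun i => F i * (F i + C i))‖ ≤ 3 := by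
    refine norm_diagonal_le _ 3 (by norm_num) fun i => ?_
    rw [abs_mul]
    calc |F i| * |F i + C i| ≤ 1 * 3 := by
          refine mul_le_mul (habsF i) ?_ (abs_nonneg _) (by norm_num)
          calc |F i + C i| ≤ |F i| + |C i| := abs_add_le _ _
            _ ≤ 3 := by linarith [habsF i, habsC i]
      _ = 3 := by norm_num
  have hT2 : ‖Matrix.diagonal (fun i => F i)
      * Matrix.vecMulVec (fun i => C i + F i) (fun i => F i)‖ ≤ 3 := by
    calc ‖Matrix.diagonal (fun i => F i)
        * Matrix.vecMulVec (fun i => C i + F i) (fun i => F i)‖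
        ≤ ‖Matrix.diagonal (fun i => F i)‖ * ‖Matrix.vecMulVec (fun i => C i + F i) (fun i => F i)‖ :=
          Matrix.l2_opNorm_mul _ _
      _ ≤ 1 * 3 := mul_le_mul hdiagF hvec1 (norm_nonneg _) (by norm_num)
      _ = 3 := by norm_num
  have hT3 : ‖Matrix.vecMulVec (fun i => F i) (fun i => C i + F i)
      * Matrix.diagonal (fun i => F i)‖ ≤ 3 := by
    calc ‖Matrix.vecMulVec (fun i => F i) (fun i => C i + F i) * Matrix.diagonal (fun i => F i)‖
        ≤ ‖Matrix.vecMulVec (fun i => F i) (fun i => C i + F i)‖ * ‖Matrix.diagonal (fun i => F i)‖ :=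
          Matrix.l2_opNorm_mul _ _
      _ ≤ 3 * 1 := mul_le_mul hvec2 hdiagF (norm_nonneg _) (by norm_num)
      _ = 3 := by norm_num
  have hs : |∑ i, (2 * C i + F i) * F i| ≤ 5 := by
    have hexp : ∑ i, (2 * C i + F i) * F i = 2 * (∑ i, C i * F i) + ∑ i, F i ^ 2 := by
      rw [Finset.mul_sum, ← Finset.sum_add_distrib]
      congr 1; ext i; ring
    rw [hexp]
    have h2 : 0 ≤ ∑ i, F i ^ 2 := Finset.sum_nonneg fun i _ => sq_nonneg _
    calc |2 * (∑ i, C i * F i) + ∑ i, F i ^ 2|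
        ≤ |2 * (∑ i, C i * F i)| + |∑ i, F i ^ 2| := abs_add_le _ _
      _ ≤ 2 * 2 + 1 := by
          rw [abs_mul, abs_of_nonneg h2]
          have h3 : |(2:ℝ)| = 2 := by norm_num
          rw [h3]
          nlinarith [hCS, hF2]
      _ = 5 := by norm_num
  have hT4 : ‖(∑ i, (2 * C i + F i) * F i) • Matrix.vecMulVec (fun i => F i) (fun i => F i)‖ ≤ 5 := by
    rw [norm_smul]
    calc ‖∑ i, (2 * C i + F i) * F i‖ * ‖Matrix.vecMulVec (fun i => F i) (fun i => F i)‖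
        ≤ 5 * 1 := by
          refine mul_le_mul ?_ hvecFF (norm_nonneg _) (by norm_num)
          rwa [Real.norm_eq_abs]
      _ = 5 := by norm_num
  have hT5 : ‖(∑ i, C i * F i) • Matrix.diagonal (fun i => F i)‖ ≤ 2 := by
    rw [norm_smul]
    calc ‖∑ i, C i * F i‖ * ‖Matrix.diagonal (fun i => F i)‖ ≤ 2 * 1 := by
          refine mul_le_mul ?_ hdiagF (norm_nonneg _) (by norm_num)
          rwa [Real.norm_eq_abs]
      _ = 2 := by norm_num
  refine ⟨?_, ?_, ?_, ?_, ?_, ?_⟩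
  · rw [opNorm_eq_norm]
    unfold Bmat
    rw [← hF, ← hCdef]
    calc ‖Matrix.diagonal (fun i => F i * (F i + C i))
          - Matrix.diagonal (fun i => F i) * Matrix.vecMulVec (fun i => C i + F i) (fun i => F i)
          - Matrix.vecMulVec (fun i => F i) (fun i => C i + F i) * Matrix.diagonal (fun i => F i)
          + (∑ i, (2 * C i + F i) * F i) • Matrix.vecMulVec (fun i => F i) (fun i => F i)
          - (∑ i, C i * F i) • Matrix.diagonal (fun i => F i)‖
        ≤ ‖Matrix.diagonal (fun i => F i * (F i + C i))
          - Matrix.diagonal (fun i => F i) * Matrix.vecMulVec (fun i => C i + F i) (fun i => F i)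
          - Matrix.vecMulVec (fun i => F i) (fun i => C i + F i) * Matrix.diagonal (fun i => F i)
          + (∑ i, (2 * C i + F i) * F i) • Matrix.vecMulVec (fun i => F i) (fun i => F i)‖
          + ‖(∑ i, C i * F i) • Matrix.diagonal (fun i => F i)‖ := norm_sub_le _ _
      _ ≤ (‖Matrix.diagonal (fun i => F i * (F i + C i))
          - Matrix.diagonal (fun i => F i) * Matrix.vecMulVec (fun i => C i + F i) (fun i => F i)
          - Matrix.vecMulVec (fun i => F i) (fun i => C i + F i) * Matrix.diagonal (fun i => F i)‖
          + ‖(∑ i, (2 * C i + F i) * F i) • Matrix.vecMulVec (fun i => F i) (fun i => F i)‖)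
          + ‖(∑ i, C i * F i) • Matrix.diagonal (fun i => F i)‖ := by
            gcongr
            exact norm_add_le _ _
      _ ≤ ((‖Matrix.diagonal (fun i => F i * (F i + C i))
          - Matrix.diagonal (fun i => F i) * Matrix.vecMulVec (fun i => C i + F i) (fun i => F i)‖
          + ‖Matrix.vecMulVec (fun i => F i) (fun i => C i + F i) * Matrix.diagonal (fun i => F i)‖)
          + ‖(∑ i, (2 * C i + F i) * F i) • Matrix.vecMulVec (fun i => F i) (fun i => F i)‖)
          + ‖(∑ i, C i * F i) • Matrix.diagonal (fun i => F i)‖ := by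
            gcongr
            exact norm_sub_le _ _
      _ ≤ (((‖Matrix.diagonal (fun i => F i * (F i + C i))‖
          + ‖Matrix.diagonal (fun i => F i) * Matrix.vecMulVec (fun i => C i + F i) (fun i => F i)‖)
          + ‖Matrix.vecMulVec (fun i => F i) (fun i => C i + F i) * Matrix.diagonal (fun i => F i)‖)
          + ‖(∑ i, (2 * C i + F i) * F i) • Matrix.vecMulVec (fun i => F i) (fun i => F i)‖)
          + ‖(∑ i, C i * F i) • Matrix.diagonal (fun i => F i)‖ := by
            gcongr
            exact norm_sub_le _ _
      _ ≤ 16 := by linarith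
  · rw [opNorm_eq_norm]; exact hT1
  · rw [opNorm_eq_norm]; exact hT2
  · rw [opNorm_eq_norm]; exact hT3
  · rw [opNorm_eq_norm]; exact hT4
  · rw [opNorm_eq_norm]; exact hT5


end
end

section
/- Suppose ‖A₁‖ ≤ R, ‖A₂‖ ≤ R. Then for all x, y ∈ ℝ^d with ‖x‖₂ ≤ R and ‖y‖₂ ≤ R, ‖u(x) − u(y)‖₂ ≤ R² √(mnd) exp(R³) · ‖x − y‖₂. -/
open Matrix BigOperators

noncomputable section

variable {n m d : ℕ}

lemma coord_le_norm {k : ℕ} (v : EuclideanSpace ℝ (Fin k)) (i : Fin k) : |v i| ≤ ‖v‖ := by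
  rw [EuclideanSpace.norm_eq]
  rw [show |v i| = Real.sqrt (|v i| ^ 2) from (Real.sqrt_sq (abs_nonneg _)).symm]
  apply Real.sqrt_le_sqrt
  have : |v i| ^ 2 = ‖v i‖ ^ 2 := by rw [Real.norm_eq_abs]
  rw [this]
  exact Finset.single_le_sum (fun j _ => sq_nonneg ‖v j‖) (Finset.mem_univ i)

lemma enorm_le_of_abs_le {k : ℕ} {c : ℝ} (hc : 0 ≤ c) {u v : EuclideanSpace ℝ (Fin k)}
    (h : ∀ i, |u i| ≤ c * |v i|) : ‖u‖ ≤ c * ‖v‖ := by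
  rw [EuclideanSpace.norm_eq, EuclideanSpace.norm_eq,
    ← Real.sqrt_sq hc, ← Real.sqrt_mul (sq_nonneg c)]
  apply Real.sqrt_le_sqrt
  rw [Finset.mul_sum]
  apply Finset.sum_le_sum
  intro i _
  have hi := h i
  simp only [Real.norm_eq_abs]
  nlinarith [abs_nonneg (u i), abs_nonneg (v i), mul_nonneg hc (abs_nonneg (v i))]

lemma mulE_norm_le {k l : ℕ} (A : Matrix (Fin k) (Fin l) ℝ) (x : EuclideanSpace ℝ (Fin l)) :
    ‖mulE A x‖ ≤ opNorm A * ‖x‖ := by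
  have hE : mulE A x = LinearMap.toContinuousLinearMap (Matrix.toEuclideanLin A) x := by
    ext i
    simp [mulE, Matrix.toEuclideanLin, Matrix.mulVec, dotProduct, mul_comm]
  rw [hE, opNorm]
  exact (LinearMap.toContinuousLinearMap (Matrix.toEuclideanLin A)).le_opNorm x

lemma mulE_sub {k l : ℕ} (A : Matrix (Fin k) (Fin l) ℝ) (x y : EuclideanSpace ℝ (Fin l)) :
    mulE A x - mulE A y = mulE A (x - y) := by
  ext i
  simp [mulE, mul_sub, Finset.sum_sub_distrib]

lemma exp_lip {a b M : ℝ} (ha : a ≤ M) (hb : b ≤ M) :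
    |Real.exp a - Real.exp b| ≤ Real.exp M * |a - b| := by
  wlog h : b ≤ a generalizing a b
  · rw [abs_sub_comm, abs_sub_comm a b]; exact this hb ha (le_of_not_ge h)
  rw [abs_of_nonneg (sub_nonneg.2 (Real.exp_le_exp.2 h)), abs_of_nonneg (sub_nonneg.2 h)]
  have h1 : Real.exp b = Real.exp a * Real.exp (b - a) := by
    rw [← Real.exp_add]; ring_nf
  have h2 := Real.add_one_le_exp (b - a)
  have h3 := Real.exp_le_exp.2 ha
  nlinarith [Real.exp_pos a, sub_nonneg.2 h]

/-- if ‖A₁‖ ≤ R, ‖A₂‖ ≤ R then for all x, y in the radius-R ball,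
‖u(x) − u(y)‖₂ ≤ R² √(mnd) exp(R³) ‖x − y‖₂. -/
theorem statement6 (n m d : ℕ) (hn : 0 < n) (hm : 0 < m) (hd : 0 < d) (R : ℝ)
    (A₁ : Matrix (Fin n) (Fin d) ℝ) (A₂ : Matrix (Fin m) (Fin n) ℝ)
    (hA₁ : opNorm A₁ ≤ R) (hA₂ : opNorm A₂ ≤ R) :
    ∀ x y : EuclideanSpace ℝ (Fin d), ‖x‖ ≤ R → ‖y‖ ≤ R →
      ‖ufun A₁ A₂ x - ufun A₁ A₂ y‖ ≤
        R ^ 2 * Real.sqrt ((m : ℝ) * n * d) * Real.exp (R ^ 3) * ‖x - y‖ := by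
  intro x y hx hy
  have hR : 0 ≤ R := le_trans (norm_nonneg _) hA₁
  -- bound on h
  have hbound : ∀ z : EuclideanSpace ℝ (Fin d), ‖z‖ ≤ R → ‖hfun A₁ z‖ ≤ R ^ 2 := by
    intro z hz
    have h1 : ‖hfun A₁ z‖ ≤ ‖mulE A₁ z‖ := by
      have := enorm_le_of_abs_le (c := 1) zero_le_one
        (u := hfun A₁ z) (v := mulE A₁ z) ?_
      · simpa using this
      · intro i
        simp only [hfun, relu, one_mul]
        rw [abs_of_nonneg (le_max_left _ _)]
        exact max_le (abs_nonneg _) (le_abs_self _)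
    calc ‖hfun A₁ z‖ ≤ ‖mulE A₁ z‖ := h1
      _ ≤ opNorm A₁ * ‖z‖ := mulE_norm_le _ _
      _ ≤ R * R := mul_le_mul hA₁ hz (norm_nonneg _) hR
      _ = R ^ 2 := (sq R).symm
  -- bound on coordinates of A₂ h z
  have wbound : ∀ z : EuclideanSpace ℝ (Fin d), ‖z‖ ≤ R → ∀ i,
      mulE A₂ (hfun A₁ z) i ≤ R ^ 3 := by
    intro z hz i
    have h1 : |mulE A₂ (hfun A₁ z) i| ≤ ‖mulE A₂ (hfun A₁ z)‖ := coord_le_norm _ _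
    have h2 : ‖mulE A₂ (hfun A₁ z)‖ ≤ opNorm A₂ * ‖hfun A₁ z‖ := mulE_norm_le _ _
    have h3 : opNorm A₂ * ‖hfun A₁ z‖ ≤ R * R ^ 2 :=
      mul_le_mul hA₂ (hbound z hz) (norm_nonneg _) hR
    calc mulE A₂ (hfun A₁ z) i ≤ |mulE A₂ (hfun A₁ z) i| := le_abs_self _
      _ ≤ R * R ^ 2 := le_trans h1 (le_trans h2 h3)
      _ = R ^ 3 := by ring
  -- Lipschitz of h
  have hlip : ‖hfun A₁ x - hfun A₁ y‖ ≤ R * ‖x - y‖ := by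
    have h1 : ‖hfun A₁ x - hfun A₁ y‖ ≤ ‖mulE A₁ x - mulE A₁ y‖ := by
      have := enorm_le_of_abs_le (c := 1) zero_le_one
        (u := hfun A₁ x - hfun A₁ y) (v := mulE A₁ x - mulE A₁ y) ?_
      · simpa using this
      · intro i
        simp only [one_mul]
        have e1 : (hfun A₁ x - hfun A₁ y) i = hfun A₁ x i - hfun A₁ y i := rfl
        have e2 : (mulE A₁ x - mulE A₁ y) i = mulE A₁ x i - mulE A₁ y i := rfl
        rw [e1, e2]
        have h := abs_max_sub_max_le_abs (mulE A₁ x i) (mulE A₁ y i) 0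
        simpa [hfun, relu, max_comm] using h
    calc ‖hfun A₁ x - hfun A₁ y‖ ≤ ‖mulE A₁ x - mulE A₁ y‖ := h1
      _ = ‖mulE A₁ (x - y)‖ := by rw [mulE_sub]
      _ ≤ opNorm A₁ * ‖x - y‖ := mulE_norm_le _ _
      _ ≤ R * ‖x - y‖ := mul_le_mul_of_nonneg_right hA₁ (norm_nonneg _)
  -- Lipschitz of u
  have ulip : ‖ufun A₁ A₂ x - ufun A₁ A₂ y‖ ≤
      Real.exp (R ^ 3) * ‖mulE A₂ (hfun A₁ x) - mulE A₂ (hfun A₁ y)‖ := by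
    apply enorm_le_of_abs_le (Real.exp_pos _).le
    intro i
    have e1 : (ufun A₁ A₂ x - ufun A₁ A₂ y) i = ufun A₁ A₂ x i - ufun A₁ A₂ y i := rfl
    have e2 : (mulE A₂ (hfun A₁ x) - mulE A₂ (hfun A₁ y)) i
        = mulE A₂ (hfun A₁ x) i - mulE A₂ (hfun A₁ y) i := rfl
    rw [e1, e2]
    simp only [ufun, vexp]
    exact exp_lip (wbound x hx i) (wbound y hy i)
  have main : ‖ufun A₁ A₂ x - ufun A₁ A₂ y‖ ≤ R ^ 2 * Real.exp (R ^ 3) * ‖x - y‖ := by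
    have h2 : ‖mulE A₂ (hfun A₁ x) - mulE A₂ (hfun A₁ y)‖ ≤ R * (R * ‖x - y‖) := by
      rw [mulE_sub]
      calc ‖mulE A₂ (hfun A₁ x - hfun A₁ y)‖ ≤ opNorm A₂ * ‖hfun A₁ x - hfun A₁ y‖ :=
            mulE_norm_le _ _
        _ ≤ R * (R * ‖x - y‖) :=
            mul_le_mul hA₂ hlip (norm_nonneg _) hR
    calc ‖ufun A₁ A₂ x - ufun A₁ A₂ y‖
        ≤ Real.exp (R ^ 3) * ‖mulE A₂ (hfun A₁ x) - mulE A₂ (hfun A₁ y)‖ := ulip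
      _ ≤ Real.exp (R ^ 3) * (R * (R * ‖x - y‖)) :=
          mul_le_mul_of_nonneg_left h2 (Real.exp_pos _).le
      _ = R ^ 2 * Real.exp (R ^ 3) * ‖x - y‖ := by ring
  have hsqrt : (1 : ℝ) ≤ Real.sqrt ((m : ℝ) * n * d) := by
    rw [show (1 : ℝ) = Real.sqrt 1 from Real.sqrt_one.symm]
    apply Real.sqrt_le_sqrt
    have hm1 : (1 : ℝ) ≤ m := Nat.one_le_cast.2 hm
    have hn1 : (1 : ℝ) ≤ n := Nat.one_le_cast.2 hn
    have hd1 : (1 : ℝ) ≤ d := Nat.one_le_cast.2 hd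
    have h12 : (1 : ℝ) ≤ (m : ℝ) * n := by
      have := mul_le_mul hm1 hn1 zero_le_one (le_trans zero_le_one hm1)
      linarith
    have := mul_le_mul h12 hd1 zero_le_one (le_trans zero_le_one h12)
    linarith
  calc ‖ufun A₁ A₂ x - ufun A₁ A₂ y‖ ≤ R ^ 2 * Real.exp (R ^ 3) * ‖x - y‖ := main
    _ ≤ R ^ 2 * Real.sqrt ((m : ℝ) * n * d) * Real.exp (R ^ 3) * ‖x - y‖ := by
        have h1 : R ^ 2 * Real.exp (R ^ 3) ≤
            R ^ 2 * Real.sqrt ((m : ℝ) * n * d) * Real.exp (R ^ 3) := by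
          calc R ^ 2 * Real.exp (R ^ 3) = R ^ 2 * Real.exp (R ^ 3) * 1 := by ring
            _ ≤ R ^ 2 * Real.exp (R ^ 3) * Real.sqrt ((m : ℝ) * n * d) :=
                mul_le_mul_of_nonneg_left hsqrt (by positivity)
            _ = R ^ 2 * Real.sqrt ((m : ℝ) * n * d) * Real.exp (R ^ 3) := by ring
        exact mul_le_mul_of_nonneg_right h1 (norm_nonneg _)

end
end
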